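/- arXiv:1706.08381 — 9 statements merged into one kernel-verified Lean document; each statement's English description precedes it below -/
import Mathlib

section
/- Let f be a monic polynomial over ℂ of degree 3 with roots r₁, r₂, r₃ (with multiplicity), let 𝔼 := (r₁+r₂+r₃)/3 be the mean of the roots, and let 𝕍 := (1/3)·∑ᵢ (rᵢ − 𝔼)² be the variance of the roots. Then f'(𝔼) = −(3/2)·𝕍, and moreover the average of the slopes at the roots satisfies (1/3)·∑ᵢ f'(rᵢ) = (3/2)·𝕍. -/
open Polynomial

/-- For a monic cubic with roots `r₁, r₂, r₃`, mean `𝔼` and variance `𝕍` of the roots: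
`f'(𝔼) = -(3/2)·𝕍` and the average of the slopes at the roots is `(3/2)·𝕍`. -/
theorem monic_cubic_slope_at_mean (r₁ r₂ r₃ : ℂ) (f : Polynomial ℂ)
    (hf : f = (X - C r₁) * (X - C r₂) * (X - C r₃))
    (E V : ℂ) (hE : E = (r₁ + r₂ + r₃) / 3)
    (hV : V = ((r₁ - E) ^ 2 + (r₂ - E) ^ 2 + (r₃ - E) ^ 2) / 3) :
    (derivative f).eval E = -(3 / 2) * V ∧
      ((derivative f).eval r₁ + (derivative f).eval r₂ + (derivative f).eval r₃) / 3
        = (3 / 2) * V := by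
  subst hf hE hV
  constructor <;> · simp [derivative_mul]; ring
end

section
/- Let f be a polynomial over ℂ of degree 3. Then the average of f over the multiset of the 2 roots of f' (counted with multiplicity) equals the value of f at the unique root of f''. Equivalently, (1/2)·∑_{t ∈ roots(f')} f(t) = f(z), where z is the root of f''. -/
/-!
Let `r, s` be the critical points of the cubic `f`. Since `f''` is the derivative of the quadratic
`f' = a (X - r) (X - s)`, its root is the midpoint `z = (r + s) / 2`. Expanding `f` around `z`, the
quadratic Taylor term vanishes, so `f - f z` is an odd function of `t - z`; hence
`f r + f s = f (z + u) + f (z - u) = 2 f z` with `u = r - z`.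
-/

open Polynomial

namespace Polynomial

variable {R : Type*} [CommRing R] [IsDomain R]

theorem eval_add_add_eval_sub_of_eval_derivative_derivative_eq_zero [CharZero R] {f : R[X]}
    (hf : f.natDegree ≤ 3) {z : R} (hz : (derivative (derivative f)).eval z = 0) (u : R) :
    f.eval (z + u) + f.eval (z - u) = 2 * f.eval z := by
  set g := taylor z f
  have hg : g.natDegree < 4 := by rw [natDegree_taylor]; omega
  -- the quadratic Taylor coefficient is `f'' z / 2!`
  have hg2 : g.coeff 2 = 0 := by
    have h := congrArg (eval z) (congrFun (factorial_smul_hasseDeriv (R := R) (k := 2)) f)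
    simp only [Function.iterate_succ, Function.iterate_zero, Function.comp_apply, id,
      nsmul_eq_mul, hz] at h
    rw [taylor_coeff]
    simpa using h
  have hodd : g.eval u + g.eval (-u) = 2 * g.coeff 0 := by
    simp only [eval_eq_sum_range' hg, Finset.sum_range_succ, Finset.sum_range_zero, hg2]
    ring
  rw [← taylor_coeff_zero (r := z), ← hodd, taylor_eval, taylor_eval, add_comm u, neg_add_eq_sub]

theorem add_eq_two_mul_of_roots_eq_pair {p : R[X]} (hp : p.natDegree = 2) {r s : R}
    (hroots : p.roots = {r, s}) {z : R} (hz : (derivative p).eval z = 0) : r + s = 2 * z := by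
  have hcard : p.roots.card = p.natDegree := by rw [hroots, hp]; rfl
  have hlc : p.leadingCoeff ≠ 0 := leadingCoeff_ne_zero.mpr (ne_zero_of_natDegree_gt (hp ▸ two_pos))
  rw [← C_leadingCoeff_mul_prod_multiset_X_sub_C hcard, hroots] at hz
  simp only [Multiset.insert_eq_cons, Multiset.map_cons, Multiset.map_singleton,
    Multiset.prod_cons, Multiset.prod_singleton, derivative_mul, derivative_C, derivative_sub,
    derivative_X, eval_add, eval_mul, eval_C, eval_sub, eval_X, eval_one, eval_zero] at hz
  have h := (mul_eq_zero.mp (by linear_combination hz : p.leadingCoeff * (2 * z - r - s) = 0))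
  linear_combination -(h.resolve_left hlc)

end Polynomial

/-- For any cubic `f` over `ℂ`, the average of `f` over the 2 roots of `f'`
(with multiplicity) equals the value of `f` at the root of `f''`. -/
theorem cubic_mean_value_at_critical_points (f : Polynomial ℂ) (hf : f.degree = 3)
    (z : ℂ) (hz : (derivative (derivative f)).eval z = 0) :
    ((derivative f).roots.map (fun t => f.eval t)).sum / 2 = f.eval z := by
  have hf3 : f.natDegree = 3 := natDegree_eq_of_degree_eq_some hf
  have hf'2 : (derivative f).natDegree = 2 := by
    rw [natDegree_derivative, hf3]
  obtain ⟨r, s, hrs⟩ := Multiset.card_eq_two.mp (hf'2 ▸ IsAlgClosed.card_roots_eq_natDegree)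
  have hs : s = z - (r - z) := by
    linear_combination add_eq_two_mul_of_roots_eq_pair hf'2 hrs hz
  have hsym := eval_add_add_eval_sub_of_eval_derivative_derivative_eq_zero hf3.le hz (r - z)
  rw [add_sub_cancel, ← hs] at hsym
  simp only [hrs, Multiset.insert_eq_cons, Multiset.map_cons, Multiset.map_singleton,
    Multiset.sum_cons, Multiset.sum_singleton, hsym]
  ring
end

section
/- Let f be a monic polynomial over ℂ of degree 3 with roots r₁, r₂, r₃ (with multiplicity), let 𝔼 := (r₁+r₂+r₃)/3 and let 𝕎 := (1/3)·∑ᵢ (rᵢ − 𝔼)³ be the third central moment of the roots. Let F be any polynomial over ℂ with F' = f (so F has degree 4). Then the average of f over the 4 roots of F (counted with multiplicity) equals 2𝕎; in particular it does not depend on the constant of integration: (1/4)·∑_{u ∈ roots(F)} f(u) = 2𝕎. -/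
/-!
Since `F'` is a monic cubic, `F = ¼ (X - a)(X - b)(X - c)(X - d)`. Comparing `F'` with `f` expresses
the elementary symmetric functions of `a, b, c, d` through those of `r₁, r₂, r₃`; the sum
`f(a) + f(b) + f(c) + f(d)` is symmetric in `a, b, c, d`, so it becomes a polynomial in the `rᵢ`,
namely `8𝕎`.
-/

open Polynomial

theorem Polynomial.natDegree_eq_natDegree_derivative_add_one {R : Type*} [Semiring R]
    [IsAddTorsionFree R] {p : R[X]} (hp : derivative p ≠ 0) :
    p.natDegree = (derivative p).natDegree + 1 := by
  have := derivative_ne_zero.mp hp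
  rw [natDegree_derivative]
  omega

theorem Polynomial.eq_C_mul_prod_X_sub_C_of_roots_eq {k : Type*} [Field k] [IsAlgClosed k]
    {p : k[X]} {a b c d : k} (h : p.roots = {a, b, c, d}) :
    p = C p.leadingCoeff * ((X - C a) * (X - C b) * (X - C c) * (X - C d)) := by
  conv_lhs =>
    rw [← C_leadingCoeff_mul_prod_multiset_X_sub_C (p := p) IsAlgClosed.card_roots_eq_natDegree, h]
  simp only [Multiset.insert_eq_cons, Multiset.map_cons, Multiset.map_singleton,
    Multiset.prod_cons, Multiset.prod_singleton, mul_assoc]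

section
variable {K : Type*} [Field K] [CharZero K]

theorem vieta_of_derivative_prod_four_eq {a b c d r₁ r₂ r₃ : K}
    (h : derivative ((X - C a) * (X - C b) * (X - C c) * (X - C d)) =
      C 4 * ((X - C r₁) * (X - C r₂) * (X - C r₃))) :
    a + b + c + d = 4 * (r₁ + r₂ + r₃) / 3 ∧
      a * b + a * c + a * d + b * c + b * d + c * d = 2 * (r₁ * r₂ + r₁ * r₃ + r₂ * r₃) ∧
      a * b * c + a * b * d + a * c * d + b * c * d = 4 * (r₁ * r₂ * r₃) := by
  have key (t : K) : (t - b) * (t - c) * (t - d) + (t - a) * (t - c) * (t - d)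
      + (t - a) * (t - b) * (t - d) + (t - a) * (t - b) * (t - c)
      = 4 * ((t - r₁) * (t - r₂) * (t - r₃)) := by
    have := congrArg (eval t) h
    simp only [derivative_mul, derivative_sub, derivative_X, derivative_C, eval_add, eval_mul,
      eval_sub, eval_X, eval_C, sub_zero, one_mul, mul_one] at this
    linear_combination this
  have h_one := key 1
  have h_neg_one := key (-1)
  have h_zero := key 0
  refine ⟨?_, ?_, ?_⟩
  · linear_combination (-(1/6 : K)) * h_one - (1/6 : K) * h_neg_one + (1/3 : K) * h_zero
  · linear_combination (1/4 : K) * h_one - (1/4 : K) * h_neg_one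
  · linear_combination -h_zero

theorem sum_eval_cubic_eq_of_vieta {a b c d r₁ r₂ r₃ : K}
    (h₁ : a + b + c + d = 4 * (r₁ + r₂ + r₃) / 3)
    (h₂ : a * b + a * c + a * d + b * c + b * d + c * d = 2 * (r₁ * r₂ + r₁ * r₃ + r₂ * r₃))
    (h₃ : a * b * c + a * b * d + a * c * d + b * c * d = 4 * (r₁ * r₂ * r₃)) :
    let g : K → K := fun t => (t - r₁) * (t - r₂) * (t - r₃)
    let m := (r₁ + r₂ + r₃) / 3
    g a + g b + g c + g d = 8 * (((r₁ - m) ^ 3 + (r₂ - m) ^ 3 + (r₃ - m) ^ 3) / 3) := by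
  intro g m
  simp only [g, m]
  linear_combination
    (((a + b + c + d) ^ 2 + (r₁ + r₂ + r₃) * (a + b + c + d) / 3
      + (4 / 9 : K) * (r₁ + r₂ + r₃) ^ 2
      - 3 * (a * b + a * c + a * d + b * c + b * d + c * d)
      + (r₁ * r₂ + r₁ * r₃ + r₂ * r₃))) * h₁
    - 2 * (r₁ + r₂ + r₃) * h₂ + 3 * h₃
end

/-- For a monic cubic `f` with roots `r₁, r₂, r₃`, third central moment `𝕎`, and any
antiderivative `F` of `f`, the average of `f` over the 4 roots of `F` is `2𝕎`
(independently of the constant of integration). -/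
theorem monic_cubic_mean_over_antiderivative_roots (r₁ r₂ r₃ : ℂ) (f : Polynomial ℂ)
    (hf : f = (X - C r₁) * (X - C r₂) * (X - C r₃))
    (E W : ℂ) (hE : E = (r₁ + r₂ + r₃) / 3)
    (hW : W = ((r₁ - E) ^ 3 + (r₂ - E) ^ 3 + (r₃ - E) ^ 3) / 3)
    (F : Polynomial ℂ) (hF : derivative F = f) :
    (F.roots.map (fun u => f.eval u)).sum / 4 = 2 * W := by
  have hf_monic : f.Monic := by rw [hf]; monicity!
  have hf_deg : f.natDegree = 3 := by rw [hf]; compute_degree!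
  have hF_deg : F.natDegree = 4 := by
    rw [natDegree_eq_natDegree_derivative_add_one (hF ▸ hf_monic.ne_zero), hF, hf_deg]
  have hF_lc : F.leadingCoeff = 4⁻¹ := by
    have := leadingCoeff_derivative F
    rw [hF, hf_monic.leadingCoeff, hF_deg] at this
    exact eq_inv_of_mul_eq_one_left (by exact_mod_cast this.symm)
  obtain ⟨a, b, c, d, hroots⟩ :=
    Multiset.card_eq_four.mp (IsAlgClosed.card_roots_eq_natDegree.trans hF_deg)
  have hderiv : derivative ((X - C a) * (X - C b) * (X - C c) * (X - C d)) =
      C 4 * ((X - C r₁) * (X - C r₂) * (X - C r₃)) := by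
    rw [← hf, ← hF, eq_C_mul_prod_X_sub_C_of_roots_eq hroots, hF_lc, derivative_C_mul, ← mul_assoc,
      ← C_mul]
    norm_num
  obtain ⟨h₁, h₂, h₃⟩ := vieta_of_derivative_prod_four_eq hderiv
  have hsum := sum_eval_cubic_eq_of_vieta h₁ h₂ h₃
  rw [hroots, hW, hE, hf]
  simp only [Multiset.insert_eq_cons, Multiset.map_cons, Multiset.map_singleton,
    Multiset.sum_cons, Multiset.sum_singleton, eval_mul, eval_sub, eval_X, eval_C]
  linear_combination hsum / 4
end

section
/- Let f be a polynomial over ℂ of degree 4, and for 1 ≤ ρ ≤ 3 let φ_ρ denote the average of f over the multiset of the (4−ρ) roots of the ρ-th derivative f^(ρ) (counted with multiplicity). Then 5·φ₁ − 6·φ₂ + 1·φ₃ = 0. -/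
open Polynomial

/-- The average of `f` over the roots of the `ρ`-th derivative of `f`,
counted with multiplicity. -/
noncomputable def phi (f : Polynomial ℂ) (ρ : ℕ) : ℂ :=
  ((derivative^[ρ] f).roots.map (fun x => f.eval x)).sum / ((f.natDegree - ρ : ℕ) : ℂ)

/-- In any quartic, `5·φ₁ − 6·φ₂ + 1·φ₃ = 0`. -/
theorem quartic_relation (f : Polynomial ℂ) (hf : f.degree = 4) :
    5 * phi f 1 - 6 * phi f 2 + 1 * phi f 3 = 0 := by
  have hd : f.natDegree = 4 := natDegree_eq_of_degree_eq_some hf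
  set a0 := f.coeff 0 with ha0d
  set a1 := f.coeff 1 with ha1d
  set a2 := f.coeff 2 with ha2d
  set a3 := f.coeff 3 with ha3d
  set a4 := f.coeff 4 with ha4d
  have ha4 : a4 ≠ 0 := by
    have hfne : f ≠ 0 := fun h => by simp [h] at hf
    have := mt leadingCoeff_eq_zero.mp hfne
    rw [ha4d, ← hd]; exact this
  have hf4 : f = C a0 + C a1 * X + C a2 * X ^ 2 + C a3 * X ^ 3 + C a4 * X ^ 4 := by
    conv_lhs => rw [f.as_sum_range' 5 (by omega)]
    simp only [Finset.sum_range_succ, ← C_mul_X_pow_eq_monomial, Finset.sum_range_zero]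
    ring
  have hder1 : derivative f = C (4 * a4) * X ^ 3 + C (3 * a3) * X ^ 2 + C (2 * a2) * X + C a1 := by
    conv_lhs => rw [hf4]
    simp only [derivative_add, derivative_mul, derivative_C, derivative_X, derivative_X_pow,
      C_mul, map_ofNat, map_natCast, derivative_ofNat, derivative_one]
    push_cast
    ring
  have hder2 : derivative^[2] f = C (12 * a4) * X ^ 2 + C (6 * a3) * X + C (2 * a2) := by
    show derivative (derivative^[1] f) = _
    rw [Function.iterate_one, hder1]
    simp only [derivative_add, derivative_mul, derivative_C, derivative_X, derivative_X_pow,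
      C_mul, map_ofNat, map_natCast, derivative_ofNat, derivative_one]
    push_cast
    ring
  have hder3 : derivative^[3] f = C (24 * a4) * X + C (6 * a3) := by
    show derivative (derivative^[2] f) = _
    rw [hder2]
    simp only [derivative_add, derivative_mul, derivative_C, derivative_X, derivative_X_pow,
      C_mul, map_ofNat, map_natCast, derivative_ofNat, derivative_one]
    push_cast
    ring
  -- degrees
  have h4a : (4 : ℂ) * a4 ≠ 0 := by simpa using ha4
  have h12a : (12 : ℂ) * a4 ≠ 0 := by simpa using ha4
  have h24a : (24 : ℂ) * a4 ≠ 0 := by simpa using ha4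
  have hnd1 : (derivative f).natDegree = 3 := by rw [hder1]; exact natDegree_cubic h4a
  have hnd2 : (derivative^[2] f).natDegree = 2 := by rw [hder2]; exact natDegree_quadratic h12a
  have hnd3 : (derivative^[3] f).natDegree = 1 := by rw [hder3]; exact natDegree_linear h24a
  have hcard1 : (derivative f).roots.card = 3 := by
    rw [splits_iff_card_roots.mp (IsAlgClosed.splits _), hnd1]
  have hcard2 : ((derivative^[2] f)).roots.card = 2 := by
    rw [splits_iff_card_roots.mp (IsAlgClosed.splits _), hnd2]
  have hcard3 : ((derivative^[3] f)).roots.card = 1 := by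
    rw [splits_iff_card_roots.mp (IsAlgClosed.splits _), hnd3]
  obtain ⟨x, y, z, hxyz⟩ := Multiset.card_eq_three.mp hcard1
  obtain ⟨u, v, huv⟩ := Multiset.card_eq_two.mp hcard2
  obtain ⟨w, hwm⟩ := Multiset.card_eq_one.mp hcard3
  -- leading coefficients
  have hlc1 : (derivative f).leadingCoeff = 4 * a4 := by
    rw [leadingCoeff, hnd1, hder1]
    simp [mul_assoc, coeff_C_mul, coeff_X_pow, coeff_C]
  have hlc2 : (derivative^[2] f).leadingCoeff = 12 * a4 := by
    rw [leadingCoeff, hnd2, hder2]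
    simp [mul_assoc, coeff_C_mul, coeff_X_pow, coeff_C]
  -- Vieta for the cubic
  have hV1 : C ((4:ℂ) * a4) * ((X - C x) * ((X - C y) * (X - C z))) =
      C (4 * a4) * X ^ 3 + C (3 * a3) * X ^ 2 + C (2 * a2) * X + C a1 := by
    have h := C_leadingCoeff_mul_prod_multiset_X_sub_C (p := derivative f)
      (by rw [hcard1, hnd1])
    rw [hxyz, hlc1, hder1] at h
    simpa [Multiset.map_cons, Multiset.prod_cons, mul_assoc] using h
  have hexp1 : ((X : ℂ[X]) - C x) * ((X - C y) * (X - C z)) =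
      X ^ 3 - C (x + y + z) * X ^ 2 + C (x * y + x * z + y * z) * X - C (x * y * z) := by
    simp only [C_add, C_mul]
    ring
  rw [hexp1] at hV1
  have e1 : 3 * a3 = -(4 * a4 * (x + y + z)) := by
    have h := congrArg (fun p => coeff p 2) hV1
    simpa [mul_assoc, coeff_C_mul, coeff_X_pow, coeff_C, coeff_mul_X_pow', mul_add, mul_sub] using h.symm
  have e2 : 2 * a2 = 4 * a4 * (x * y + x * z + y * z) := by
    have h := congrArg (fun p => coeff p 1) hV1
    simpa [mul_assoc, coeff_C_mul, coeff_X_pow, coeff_C, coeff_mul_X_pow', mul_add, mul_sub] using h.symm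
  have e3 : a1 = -(4 * a4 * (x * y * z)) := by
    have h := congrArg (fun p => coeff p 0) hV1
    simpa [mul_assoc, coeff_C_mul, coeff_X_pow, coeff_C, coeff_mul_X_pow', mul_add, mul_sub] using h.symm
  -- Vieta for the quadratic
  have hV2 : C ((12:ℂ) * a4) * ((X - C u) * (X - C v)) =
      C (12 * a4) * X ^ 2 + C (6 * a3) * X + C (2 * a2) := by
    have h := C_leadingCoeff_mul_prod_multiset_X_sub_C (p := derivative^[2] f)
      (by rw [hcard2, hnd2])
    rw [huv, hlc2, hder2] at h
    simpa [Multiset.map_cons, Multiset.prod_cons, mul_assoc] using h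
  have hexp2 : ((X : ℂ[X]) - C u) * (X - C v) =
      X ^ 2 - C (u + v) * X + C (u * v) := by
    simp only [C_add, C_mul]
    ring
  rw [hexp2] at hV2
  have e4 : 6 * a3 = -(12 * a4 * (u + v)) := by
    have h := congrArg (fun p => coeff p 1) hV2
    simpa [mul_assoc, coeff_C_mul, coeff_X_pow, coeff_C, coeff_mul_X_pow', mul_add, mul_sub] using h.symm
  have e5 : 2 * a2 = 12 * a4 * (u * v) := by
    have h := congrArg (fun p => coeff p 0) hV2
    simpa [mul_assoc, coeff_C_mul, coeff_X_pow, coeff_C, coeff_mul_X_pow', mul_add, mul_sub] using h.symm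
  -- the linear root
  have hwroot : (derivative^[3] f).IsRoot w := by
    refine isRoot_of_mem_roots ?_
    rw [hwm]
    simp
  have e6 : 24 * a4 * w + 6 * a3 = 0 := by
    rw [hder3] at hwroot
    simpa [IsRoot] using hwroot
  -- evaluation of f
  have hev : ∀ t : ℂ, f.eval t = a4 * t ^ 4 + a3 * t ^ 3 + a2 * t ^ 2 + a1 * t + a0 := by
    intro t
    conv_lhs => rw [hf4]
    simp
    ring
  -- solved forms
  have ha3' : a3 = -(4 * a4 * (x + y + z)) / 3 := by linear_combination e1 / 3
  have ha2' : a2 = 2 * a4 * (x * y + x * z + y * z) := by linear_combination e2 / 2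
  have hP : u + v = 2 * (x + y + z) / 3 := by
    have h12 : (12 : ℂ) * a4 ≠ 0 := h12a
    have : (12 * a4) * (u + v) = (12 * a4) * (2 * (x + y + z) / 3) := by
      linear_combination e4 - 2 * e1
    exact mul_left_cancel₀ h12 this
  have hQ : u * v = (x * y + x * z + y * z) / 3 := by
    have : (12 * a4) * (u * v) = (12 * a4) * ((x * y + x * z + y * z) / 3) := by
      linear_combination e2 - e5
    exact mul_left_cancel₀ h12a this
  have hW : w = (x + y + z) / 3 := by
    have : (24 * a4) * w = (24 * a4) * ((x + y + z) / 3) := by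
      linear_combination e6 - 2 * e1
    exact mul_left_cancel₀ h24a this
  -- sum over roots of the quadratic, in symmetric form
  have hsum2 : f.eval u + f.eval v =
      a4 * ((u + v) ^ 4 - 4 * (u + v) ^ 2 * (u * v) + 2 * (u * v) ^ 2) +
      a3 * ((u + v) ^ 3 - 3 * (u + v) * (u * v)) +
      a2 * ((u + v) ^ 2 - 2 * (u * v)) + a1 * (u + v) + 2 * a0 := by
    rw [hev u, hev v]
    ring
  rw [hP, hQ] at hsum2
  have key : 5 * (f.eval x + f.eval y + f.eval z) - 9 * (f.eval u + f.eval v) +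
      3 * f.eval w = 0 := by
    rw [hsum2, hev x, hev y, hev z, hW, hev, ha3', ha2', e3]
    ring
  -- unfold phi
  have hroots1 : (derivative^[1] f).roots = {x, y, z} := by
    rw [Function.iterate_one]; exact hxyz
  rw [phi, phi, phi, hroots1, huv, hwm, hd]
  simp only [Multiset.map_cons, Multiset.map_singleton, Multiset.sum_cons,
    Multiset.sum_singleton]
  norm_num
  linear_combination key / 3
end

section
/- Let f be a monic polynomial over ℂ of degree 4 with roots r₁, r₂, r₃, r₄ (with multiplicity), and define the normalized elementary symmetric functions r̄ := e₁/4, r̄₂ := e₂/6, r̄₃ := e₃/4, r̄₄ := e₄, where eᵢ is the i-th elementary symmetric polynomial in r₁,…,r₄. Then the average of f over the 3 roots of f' (counted with multiplicity) equals −9·r̄⁴ + 18·r̄²·r̄₂ − 4·r̄·r̄₃ − 6·r̄₂² + r̄₄. -/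
/-!
Dividing `f = X⁴ - 4r̄X³ + 6r̄₂X² - 4r̄₃X + r̄₄` by `f'/4 = X³ - 3r̄X² + 3r̄₂X - r̄₃` gives
`f = (X - r̄)·f'/4 + R` with the quadratic remainder
`R = 3(r̄₂ - r̄²)X² + 3(r̄r̄₂ - r̄₃)X + (r̄₄ - r̄r̄₃)`, so `f` and `R` agree on the roots of `f'`.
By Vieta these roots `t` satisfy `∑ t = 3r̄` and `∑ t² = 9r̄² - 6r̄₂`, which makes the average
of `R` over them an explicit polynomial in the `r̄ᵢ`.
-/

open Polynomial

section CommRing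

variable {R : Type*} [CommRing R]

/-- The monic quartic whose roots have `r̄ = a`, `r̄₂ = b`, `r̄₃ = c`, `r̄₄ = d`. -/
noncomputable def normalizedQuartic (a b c d : R) : R[X] :=
  X ^ 4 - C (4 * a) * X ^ 3 + C (6 * b) * X ^ 2 - C (4 * c) * X + C d

noncomputable def normalizedCubic (a b c : R) : R[X] :=
  X ^ 3 - C (3 * a) * X ^ 2 + C (3 * b) * X - C c

theorem derivative_normalizedQuartic (a b c d : R) :
    derivative (normalizedQuartic a b c d) = C 4 * normalizedCubic a b c := by
  simp only [normalizedQuartic, normalizedCubic, map_mul, map_ofNat, derivative_add,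
    derivative_sub, derivative_mul, derivative_X_pow, derivative_C, derivative_X, derivative_ofNat,
    Nat.cast_ofNat]
  ring

theorem normalizedQuartic_eq_mul_add (a b c d : R) :
    normalizedQuartic a b c d = normalizedCubic a b c * (X - C a) +
      (C (3 * (b - a ^ 2)) * X ^ 2 + C (3 * (a * b - c)) * X + C (d - a * c)) := by
  simp only [normalizedQuartic, normalizedCubic, map_mul, map_sub, map_pow, map_ofNat]
  ring

theorem vieta_of_prod_X_sub_C_eq_normalizedCubic {t₁ t₂ t₃ a b c : R}
    (h : (X - C t₁) * (X - C t₂) * (X - C t₃) = normalizedCubic a b c) :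
    t₁ + t₂ + t₃ = 3 * a ∧ t₁ * t₂ + t₁ * t₃ + t₂ * t₃ = 3 * b ∧ t₁ * t₂ * t₃ = c := by
  have hexp : (X - C t₁) * (X - C t₂) * (X - C t₃) = X ^ 3 - C (t₁ + t₂ + t₃) * X ^ 2
      + C (t₁ * t₂ + t₁ * t₃ + t₂ * t₃) * X - C (t₁ * t₂ * t₃) := by
    simp only [map_add, map_mul]
    ring
  rw [hexp, normalizedCubic] at h
  have h₂ := congrArg (coeff · 2) h
  have h₁ := congrArg (coeff · 1) h
  have h₀ := congrArg (coeff · 0) h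
  simp only [coeff_add, coeff_sub, coeff_X_pow, coeff_C_mul_X_pow, coeff_C_mul_X, coeff_C]
    at h₂ h₁ h₀
  norm_num at h₂ h₁ h₀
  exact ⟨by linear_combination -h₂, h₁, h₀⟩

theorem map_roots_eval_mul_add [IsDomain R] (p s r : R[X]) :
    p.roots.map (fun t => (p * s + r).eval t) = p.roots.map (fun t => r.eval t) :=
  Multiset.map_congr rfl fun t ht => by
    rw [eval_add, eval_mul, (isRoot_of_mem_roots ht).eq_zero, zero_mul, zero_add]

end CommRing

theorem prod_X_sub_C_eq_normalizedQuartic {K : Type*} [Field K] [CharZero K] (r₁ r₂ r₃ r₄ : K) :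
    (X - C r₁) * (X - C r₂) * (X - C r₃) * (X - C r₄) = normalizedQuartic
      ((r₁ + r₂ + r₃ + r₄) / 4)
      ((r₁ * r₂ + r₁ * r₃ + r₁ * r₄ + r₂ * r₃ + r₂ * r₄ + r₃ * r₄) / 6)
      ((r₁ * r₂ * r₃ + r₁ * r₂ * r₄ + r₁ * r₃ * r₄ + r₂ * r₃ * r₄) / 4)
      (r₁ * r₂ * r₃ * r₄) := by
  have h4 : (4 : K) ≠ 0 := by norm_num
  have h6 : (6 : K) ≠ 0 := by norm_num
  rw [normalizedQuartic, mul_div_cancel₀ _ h4, mul_div_cancel₀ _ h6, mul_div_cancel₀ _ h4]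
  simp only [map_add, map_mul]
  ring

section IsAlgClosed

variable {K : Type*} [Field K] [IsAlgClosed K]

theorem exists_roots_normalizedCubic_eq (a b c : K) :
    ∃ t₁ t₂ t₃ : K, (normalizedCubic a b c).roots = {t₁, t₂, t₃} ∧
      (X - C t₁) * (X - C t₂) * (X - C t₃) = normalizedCubic a b c := by
  have hmonic : (normalizedCubic a b c).Monic := by
    unfold normalizedCubic; monicity!
  have hsplit : (normalizedCubic a b c).Splits := IsAlgClosed.splits _
  have hdeg : (normalizedCubic a b c).natDegree = 3 := by
    unfold normalizedCubic; compute_degree!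
  obtain ⟨t₁, t₂, t₃, ht⟩ :=
    Multiset.card_eq_three.mp (hdeg ▸ (splits_iff_card_roots.mp hsplit))
  refine ⟨t₁, t₂, t₃, ht, ?_⟩
  conv_rhs => rw [hsplit.eq_prod_roots_of_monic hmonic, ht]
  simp [mul_assoc]

theorem sum_map_roots_normalizedCubic (a b c α β γ : K) :
    ((normalizedCubic a b c).roots.map fun t => α * t ^ 2 + β * t + γ).sum
      = α * (9 * a ^ 2 - 6 * b) + β * (3 * a) + 3 * γ := by
  obtain ⟨t₁, t₂, t₃, hroots, hprod⟩ := exists_roots_normalizedCubic_eq a b c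
  obtain ⟨he₁, he₂, -⟩ := vieta_of_prod_X_sub_C_eq_normalizedCubic hprod
  have hsq : t₁ ^ 2 + t₂ ^ 2 + t₃ ^ 2 = 9 * a ^ 2 - 6 * b := by
    linear_combination (t₁ + t₂ + t₃ + 3 * a) * he₁ - 2 * he₂
  rw [hroots]
  simp only [Multiset.insert_eq_cons, Multiset.map_cons, Multiset.map_singleton,
    Multiset.sum_cons, Multiset.sum_singleton]
  linear_combination α * hsq + β * he₁

end IsAlgClosed

/-- For a monic quartic with roots `r₁,…,r₄` and normalized elementary symmetric
functions `r̄ = e₁/4`, `r̄₂ = e₂/6`, `r̄₃ = e₃/4`, `r̄₄ = e₄`, the average of `f` over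
the 3 roots of `f'` equals `−9·r̄⁴ + 18·r̄²·r̄₂ − 4·r̄·r̄₃ − 6·r̄₂² + r̄₄`. -/
theorem quartic_mean_over_first_derivative_roots (r₁ r₂ r₃ r₄ : ℂ) (f : Polynomial ℂ)
    (hf : f = (X - C r₁) * (X - C r₂) * (X - C r₃) * (X - C r₄))
    (rb rb2 rb3 rb4 : ℂ)
    (h1 : rb = (r₁ + r₂ + r₃ + r₄) / 4)
    (h2 : rb2 = (r₁ * r₂ + r₁ * r₃ + r₁ * r₄ + r₂ * r₃ + r₂ * r₄ + r₃ * r₄) / 6)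
    (h3 : rb3 = (r₁ * r₂ * r₃ + r₁ * r₂ * r₄ + r₁ * r₃ * r₄ + r₂ * r₃ * r₄) / 4)
    (h4 : rb4 = r₁ * r₂ * r₃ * r₄) :
    ((derivative f).roots.map (fun t => f.eval t)).sum / 3
      = -9 * rb ^ 4 + 18 * rb ^ 2 * rb2 - 4 * rb * rb3 - 6 * rb2 ^ 2 + rb4 := by
  rw [hf, prod_X_sub_C_eq_normalizedQuartic, ← h1, ← h2, ← h3, ← h4,
    derivative_normalizedQuartic, roots_C_mul _ (by norm_num), normalizedQuartic_eq_mul_add,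
    map_roots_eval_mul_add]
  simp only [eval_add, eval_mul, eval_C, eval_pow, eval_X]
  rw [sum_map_roots_normalizedCubic]
  ring
end

section
/- Let f be a monic polynomial over ℂ of degree 4 with roots r₁, r₂, r₃, r₄ (with multiplicity), and define the normalized elementary symmetric functions r̄ := e₁/4, r̄₂ := e₂/6, r̄₃ := e₃/4, r̄₄ := e₄, where eᵢ is the i-th elementary symmetric polynomial in r₁,…,r₄. Then the average of f over the 2 roots of f'' (counted with multiplicity) equals −8·r̄⁴ + 16·r̄²·r̄₂ − 4·r̄·r̄₃ − 5·r̄₂² + r̄₄. -/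
open Polynomial

/-- For a monic quartic with roots `r₁,…,r₄` and normalized elementary symmetric
functions `r̄ = e₁/4`, `r̄₂ = e₂/6`, `r̄₃ = e₃/4`, `r̄₄ = e₄`, the average of `f` over
the 2 roots of `f''` equals `−8·r̄⁴ + 16·r̄²·r̄₂ − 4·r̄·r̄₃ − 5·r̄₂² + r̄₄`. -/
theorem quartic_mean_over_second_derivative_roots (r₁ r₂ r₃ r₄ : ℂ) (f : Polynomial ℂ)
    (hf : f = (X - C r₁) * (X - C r₂) * (X - C r₃) * (X - C r₄))
    (rb rb2 rb3 rb4 : ℂ)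
    (h1 : rb = (r₁ + r₂ + r₃ + r₄) / 4)
    (h2 : rb2 = (r₁ * r₂ + r₁ * r₃ + r₁ * r₄ + r₂ * r₃ + r₂ * r₄ + r₃ * r₄) / 6)
    (h3 : rb3 = (r₁ * r₂ * r₃ + r₁ * r₂ * r₄ + r₁ * r₃ * r₄ + r₂ * r₃ * r₄) / 4)
    (h4 : rb4 = r₁ * r₂ * r₃ * r₄) :
    ((derivative (derivative f)).roots.map (fun s => f.eval s)).sum / 2
      = -8 * rb ^ 4 + 16 * rb ^ 2 * rb2 - 4 * rb * rb3 - 5 * rb2 ^ 2 + rb4 := by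
  set a : ℂ := (r₁ + r₂ + r₃ + r₄) / 4 with ha
  set e2 : ℂ := r₁ * r₂ + r₁ * r₃ + r₁ * r₄ + r₂ * r₃ + r₂ * r₄ + r₃ * r₄ with he2
  obtain ⟨t, ht⟩ : ∃ t : ℂ, t ^ 2 = a ^ 2 - e2 / 6 := by
    obtain ⟨t, ht⟩ := Complex.isAlgClosed.exists_pow_nat_eq (a ^ 2 - e2 / 6) (n := 2)
      (by norm_num)
    exact ⟨t, ht⟩
  have hg : derivative (derivative f) = C 12 * ((X - C (a + t)) * (X - C (a - t))) := by
    have hA : (C r₁ + C r₂ + C r₃ + C r₄ : ℂ[X]) = 4 * C a := by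
      have hs : r₁ + r₂ + r₃ + r₄ = 4 * a := by rw [ha]; ring
      calc (C r₁ + C r₂ + C r₃ + C r₄ : ℂ[X]) = C (r₁ + r₂ + r₃ + r₄) := by
            simp [C_add]
        _ = 4 * C a := by rw [hs, C_mul, map_ofNat]
    have hT : (6 : ℂ[X]) * C t ^ 2 = 6 * C a ^ 2 - (C r₁ * C r₂ + C r₁ * C r₃ +
        C r₁ * C r₄ + C r₂ * C r₃ + C r₂ * C r₄ + C r₃ * C r₄) := by
      have hs : 6 * t ^ 2 = 6 * a ^ 2 - e2 := by rw [ht]; ring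
      have : (C (6 * t ^ 2) : ℂ[X]) = C (6 * a ^ 2 - e2) := by rw [hs]
      simpa [he2, C_add, C_mul, C_sub, C_pow, map_ofNat] using this
    rw [hf]
    simp only [derivative_mul, derivative_add, derivative_sub, derivative_X, derivative_C,
      derivative_one, C_add, C_sub, mul_one, one_mul, sub_zero, map_ofNat]
    linear_combination (-6 * (X : ℂ[X])) * hA + 2 * hT
  rw [hg]
  rw [roots_C_mul _ (by norm_num : (12:ℂ) ≠ 0),
    roots_mul (mul_ne_zero (X_sub_C_ne_zero _) (X_sub_C_ne_zero _)),
    roots_X_sub_C, roots_X_sub_C]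
  simp only [hf, eval_mul, eval_sub, eval_X, eval_C, Multiset.map_add,
    Multiset.map_singleton, Multiset.sum_add, Multiset.sum_singleton]
  rw [h1, h2, h3, h4]
  rw [ha, he2] at ht ⊢
  linear_combination (t ^ 2 - 5 * ((r₁ + r₂ + r₃ + r₄) / 4) ^ 2
    + 5 * (r₁ * r₂ + r₁ * r₃ + r₁ * r₄ + r₂ * r₃ + r₂ * r₄ + r₃ * r₄) / 6) * ht
end

section
/- Let f be a polynomial over ℂ of degree 5, and for 1 ≤ ρ ≤ 4 let φ_ρ denote the average of f over the multiset of the (5−ρ) roots of the ρ-th derivative f^(ρ) (counted with multiplicity). Then 1·φ₁ − 3·φ₃ + 2·φ₄ = 0. -/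
/-!
Comparing coefficients of `f^(ρ)` with its factorization over its roots (Vieta) expresses
the coefficients of `f`, the sum and product of the two roots `u, v` of `f'''` and the root `t`
of `f''''` through the elementary symmetric functions of the four roots of `f'`. As
`f(u) + f(v)` is a polynomial in `u + v` and `uv`, the relation `φ₁ - 3φ₃ + 2φ₄ = 0` becomes a
polynomial identity in the leading coefficient, the roots of `f'` and `f(0)`.
-/

open Polynomial

open Finset

namespace Polynomial

theorem natDegree_iterate_derivative_eq {R : Type*} [Semiring R] [IsAddTorsionFree R]
    (p : R[X]) (k : ℕ) : (derivative^[k] p).natDegree = p.natDegree - k := by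
  induction k with
  | zero => rfl
  | succ k ih => rw [Function.iterate_succ_apply', natDegree_derivative, ih, Nat.sub_sub]

theorem descFactorial_mul_coeff_eq_esymm_roots_iterate_derivative {K : Type*} [Field K]
    [CharZero K] [IsAlgClosed K] (f : K[X]) {ρ m : ℕ} (h : m + ρ ≤ f.natDegree) :
    ((m + ρ).descFactorial ρ : K) * f.coeff (m + ρ) =
      f.natDegree.descFactorial ρ * f.leadingCoeff * (-1) ^ (f.natDegree - ρ - m) *
        (derivative^[ρ] f).roots.esymm (f.natDegree - ρ - m) := by
  have hvieta := coeff_eq_esymm_roots_of_card (p := derivative^[ρ] f)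
    IsAlgClosed.card_roots_eq_natDegree (k := m) (by rw [natDegree_iterate_derivative_eq]; omega)
  rw [coeff_iterate_derivative, leadingCoeff, coeff_iterate_derivative,
    natDegree_iterate_derivative_eq, Nat.sub_add_cancel (by omega : ρ ≤ f.natDegree),
    nsmul_eq_mul, nsmul_eq_mul] at hvieta
  rw [hvieta, leadingCoeff]

end Polynomial

theorem quintic_eval_relation_of_coeff_relations (f : ℂ[X]) (hf : f.natDegree ≤ 5)
    {x y z w u v t : ℂ} (ha : f.coeff 5 ≠ 0)
    (h₁ : f.coeff 1 = 5 * f.coeff 5 * (x * y * z * w))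
    (h₂ : 2 * f.coeff 2 = -5 * f.coeff 5 * (x * y * z + x * y * w + x * z * w + y * z * w))
    (h₃ : 3 * f.coeff 3 = 5 * f.coeff 5 * (x * y + x * z + x * w + y * z + y * w + z * w))
    (h₄ : 4 * f.coeff 4 = -5 * f.coeff 5 * (x + y + z + w))
    (hprod₃ : 6 * f.coeff 3 = 60 * f.coeff 5 * (u * v))
    (hsum₃ : 24 * f.coeff 4 = -60 * f.coeff 5 * (u + v))
    (hroot₄ : 24 * f.coeff 4 = -120 * f.coeff 5 * t) :
    (f.eval x + f.eval y + f.eval z + f.eval w) / 4 - 3 * ((f.eval u + f.eval v) / 2)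
      + 2 * f.eval t = 0 := by
  have hsum : u + v = (x + y + z + w) / 2 :=
    mul_left_cancel₀ ha (by linear_combination hsum₃ / 60 - h₄ / 10)
  have hprod : u * v = (x * y + x * z + x * w + y * z + y * w + z * w) / 6 :=
    mul_left_cancel₀ ha (by linear_combination h₃ / 30 - hprod₃ / 60)
  have ht : t = (x + y + z + w) / 4 :=
    mul_left_cancel₀ ha (by linear_combination hroot₄ / 120 - h₄ / 20)
  have hc2 : f.coeff 2 = -5 / 2 * f.coeff 5 * (x * y * z + x * y * w + x * z * w + y * z * w) := by
    linear_combination h₂ / 2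
  have hc3 : f.coeff 3 = 5 / 3 * f.coeff 5 * (x * y + x * z + x * w + y * z + y * w + z * w) := by
    linear_combination h₃ / 3
  have hc4 : f.coeff 4 = -5 / 4 * f.coeff 5 * (x + y + z + w) := by linear_combination h₄ / 4
  have heval (r : ℂ) : f.eval r = ∑ k ∈ range 6, f.coeff k * r ^ k :=
    eval_eq_sum_range' (by omega) r
  have hpair : f.eval u + f.eval v = 2 * f.coeff 0 + f.coeff 1 * (u + v)
      + f.coeff 2 * ((u + v) ^ 2 - 2 * (u * v)) + f.coeff 3 * ((u + v) ^ 3 - 3 * (u * v) * (u + v))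
      + f.coeff 4 * ((u + v) ^ 4 - 4 * (u * v) * (u + v) ^ 2 + 2 * (u * v) ^ 2)
      + f.coeff 5 * ((u + v) ^ 5 - 5 * (u * v) * (u + v) ^ 3 + 5 * (u * v) ^ 2 * (u + v)) := by
    simp only [heval, sum_range_succ, sum_range_zero]
    ring
  rw [hpair, hsum, hprod, ht]
  simp only [heval, sum_range_succ, sum_range_zero, h₁, hc2, hc3, hc4]
  ring

theorem quintic_eval_relation_of_roots (f : ℂ[X]) (hf : f.degree = 5) {x y z w u v t : ℂ}
    (h1 : (derivative^[1] f).roots = {x, y, z, w}) (h3 : (derivative^[3] f).roots = {u, v})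
    (h4 : (derivative^[4] f).roots = {t}) :
    (f.eval x + f.eval y + f.eval z + f.eval w) / 4 - 3 * ((f.eval u + f.eval v) / 2)
      + 2 * f.eval t = 0 := by
  have hn : f.natDegree = 5 := natDegree_eq_of_degree_eq_some hf
  -- `vieta ρ m` compares the coefficient of `X ^ m` in `f^(ρ)`; `vρm` is its instance.
  have vieta (ρ m : ℕ) (h : m + ρ ≤ 5) :=
    descFactorial_mul_coeff_eq_esymm_roots_iterate_derivative f (ρ := ρ) (m := m) (hn ▸ h)
  simp only [hn, leadingCoeff] at vieta
  have v10 := vieta 1 0 (by norm_num)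
  have v11 := vieta 1 1 (by norm_num)
  have v12 := vieta 1 2 (by norm_num)
  have v13 := vieta 1 3 (by norm_num)
  have v30 := vieta 3 0 (by norm_num)
  have v31 := vieta 3 1 (by norm_num)
  have v40 := vieta 4 0 (by norm_num)
  rw [h1] at v10 v11 v12 v13
  rw [h3] at v30 v31
  rw [h4] at v40
  norm_num [Multiset.esymm, Multiset.powersetCard_one] at v10 v11 v12 v13 v30 v31 v40
  exact quintic_eval_relation_of_coeff_relations f hn.le (coeff_ne_zero_of_eq_degree hf)
    (by linear_combination v10) (by linear_combination v11) (by linear_combination v12)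
    (by linear_combination v13) (by linear_combination v30) (by linear_combination v31)
    (by linear_combination v40)

/-- In any quintic, `1·φ₁ − 3·φ₃ + 2·φ₄ = 0`. -/
theorem quintic_relation_c (f : Polynomial ℂ) (hf : f.degree = 5) :
    1 * phi f 1 - 3 * phi f 3 + 2 * phi f 4 = 0 := by
  have hn : f.natDegree = 5 := natDegree_eq_of_degree_eq_some hf
  have hcard (ρ : ℕ) : (derivative^[ρ] f).roots.card = 5 - ρ := by
    rw [IsAlgClosed.card_roots_eq_natDegree, natDegree_iterate_derivative_eq, hn]
  obtain ⟨x, y, z, w, h1⟩ := Multiset.card_eq_four.mp (hcard 1)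
  obtain ⟨u, v, h3⟩ := Multiset.card_eq_two.mp (hcard 3)
  obtain ⟨t, h4⟩ := Multiset.card_eq_one.mp (hcard 4)
  rw [phi, phi, phi, h1, h3, h4, hn]
  norm_num
  linear_combination quintic_eval_relation_of_roots f hf h1 h3 h4
end

section
/- Let f be a polynomial over ℂ of degree 5, and for 1 ≤ ρ ≤ 4 let φ_ρ denote the average of f over the multiset of the (5−ρ) roots of the ρ-th derivative f^(ρ) (counted with multiplicity). Then 2·φ₂ − 5·φ₃ + 3·φ₄ = 0. -/
/-!
Translating the variable does not change any `φ_ρ`, so we may assume that `f⁽⁴⁾` vanishes at `0`,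
i.e. `f = a x⁵ + b x³ + c x² + d x + e`. Then `f⁽⁴⁾ = 120 a x`, `f⁽³⁾ = 60 a x² + 6 b` and
`f⁽²⁾ = 20 a x³ + 6 b x + 2 c`, and Vieta's formulas give `φ₄ = e`, `φ₃ = e - bc/(10a)` and
`φ₂ = e - bc/(4a)`.
-/

open Polynomial

theorem iterate_derivative_comp_X_add_C {R : Type*} [CommSemiring R] (p : R[X]) (c : R) (n : ℕ) :
    derivative^[n] (p.comp (X + C c)) = (derivative^[n] p).comp (X + C c) := by
  induction n with
  | zero => rfl
  | succ n ih => simp [Function.iterate_succ_apply', ih, derivative_comp]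

theorem map_roots_comp_X_add_C {R : Type*} [CommRing R] [IsDomain R] (p : R[X]) (c : R) :
    (p.comp (X + C c)).roots.map (· + c) = p.roots := by
  simpa using map_roots_comp_C_mul_X_add_C p 1 c isUnit_one

theorem phi_comp_X_add_C (f : ℂ[X]) (c : ℂ) (ρ : ℕ) : phi (f.comp (X + C c)) ρ = phi f ρ := by
  have hdeg : (f.comp (X + C c)).natDegree = f.natDegree := by simp [natDegree_comp]
  rw [phi, phi, hdeg, iterate_derivative_comp_X_add_C,
    ← map_roots_comp_X_add_C (derivative^[ρ] f) c, Multiset.map_map]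
  simp [eval_comp]

theorem exists_coeff_comp_X_add_C_eq_zero {K : Type*} [Field K] [IsAlgClosed K] [CharZero K]
    (f : K[X]) {n : ℕ} (hf : f.natDegree = n + 1) : ∃ c, (f.comp (X + C c)).coeff n = 0 := by
  have hcoeff : (derivative^[n] f).coeff 1 ≠ 0 := by
    rw [coeff_iterate_derivative, add_comm 1 n, ← hf, nsmul_eq_mul]
    exact mul_ne_zero (by simp [Nat.descFactorial_eq_zero_iff_lt, hf])
      (leadingCoeff_ne_zero.mpr (by rintro rfl; simp at hf))
  have hdeg : (derivative^[n] f).degree ≠ 0 := fun h0 => hcoeff <| by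
    rw [eq_C_of_degree_eq_zero h0, coeff_C_succ]
  obtain ⟨c, hc⟩ := IsAlgClosed.exists_root _ hdeg
  refine ⟨c, ?_⟩
  -- the `n`-th coefficient of the translate is `f⁽ⁿ⁾(c) / n!`
  have h := coeff_iterate_derivative (k := n) (f.comp (X + C c)) 0
  rw [coeff_zero_eq_eval_zero, iterate_derivative_comp_X_add_C, eval_comp, zero_add,
    Nat.descFactorial_self, nsmul_eq_mul] at h
  simpa [hc.eq_zero, Nat.factorial_ne_zero] using h.symm

theorem Cubic.exists_roots_eq_three {K : Type*} [Field K] [IsAlgClosed K] (P : Cubic K)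
    (ha : P.a ≠ 0) : ∃ x y z : K, P.toPoly.roots = {x, y, z} ∧
      P = ⟨P.a, P.a * -(x + y + z), P.a * (x * y + x * z + y * z), P.a * -(x * y * z)⟩ := by
  obtain ⟨x, y, z, h3⟩ :=
    (Cubic.splits_iff_roots_eq_three (φ := RingHom.id K) ha).mp (IsAlgClosed.splits _)
  exact ⟨x, y, z, h3, Cubic.eq_sum_three_roots ha h3⟩

noncomputable def depressedQuintic (a b c d e : ℂ) : ℂ[X] :=
  C a * X ^ 5 + C b * X ^ 3 + C c * X ^ 2 + C d * X + C e

theorem eq_depressedQuintic_of_coeff_four_eq_zero (f : ℂ[X]) (hf : f.natDegree ≤ 5)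
    (h4 : f.coeff 4 = 0) :
    f = depressedQuintic (f.coeff 5) (f.coeff 3) (f.coeff 2) (f.coeff 1) (f.coeff 0) := by
  conv_lhs => rw [as_sum_range_C_mul_X_pow' f (Nat.lt_succ_of_le hf)]
  simp only [Finset.sum_range_succ, Finset.range_zero, Finset.sum_empty, h4, map_zero, zero_mul,
    add_zero, pow_zero, pow_one, mul_one, depressedQuintic]
  ring

section DepressedQuintic

variable (a b c d e : ℂ)

theorem eval_depressedQuintic (x : ℂ) :
    (depressedQuintic a b c d e).eval x = a * x ^ 5 + b * x ^ 3 + c * x ^ 2 + d * x + e := by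
  simp [depressedQuintic]

theorem natDegree_depressedQuintic (ha : a ≠ 0) : (depressedQuintic a b c d e).natDegree = 5 := by
  unfold depressedQuintic
  compute_degree!

theorem iterate_derivative_two_depressedQuintic :
    derivative^[2] (depressedQuintic a b c d e) =
      C (20 * a) * X ^ 3 + C (6 * b) * X + C (2 * c) := by
  simp only [depressedQuintic, Function.iterate_succ_apply', Function.iterate_zero_apply,
    derivative_add, derivative_C_mul_X_pow, derivative_C_mul_X, derivative_C, derivative_zero]
  ring_nf

theorem iterate_derivative_three_depressedQuintic :
    derivative^[3] (depressedQuintic a b c d e) = C (60 * a) * X ^ 2 + C (6 * b) := by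
  rw [Function.iterate_succ_apply', iterate_derivative_two_depressedQuintic]
  simp only [derivative_add, derivative_C_mul_X_pow, derivative_C_mul_X, derivative_C]
  ring_nf

theorem iterate_derivative_four_depressedQuintic :
    derivative^[4] (depressedQuintic a b c d e) = C (120 * a) * X := by
  rw [Function.iterate_succ_apply', iterate_derivative_three_depressedQuintic]
  simp only [derivative_add, derivative_C_mul_X_pow, derivative_C]
  ring_nf

variable {a}

theorem phi_depressedQuintic_four (ha : a ≠ 0) : phi (depressedQuintic a b c d e) 4 = e := by
  rw [phi, iterate_derivative_four_depressedQuintic, natDegree_depressedQuintic a b c d e ha,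
    roots_C_mul _ (by simpa using ha), roots_X]
  simp [eval_depressedQuintic]

theorem phi_depressedQuintic_three (ha : a ≠ 0) :
    phi (depressedQuintic a b c d e) 3 = e - b * c / (10 * a) := by
  obtain ⟨s, hs⟩ := IsAlgClosed.exists_pow_nat_eq (-b / (10 * a)) two_pos
  obtain rfl : b = -(10 * a * s ^ 2) := by rw [hs]; field_simp
  have hfactor : C (60 * a) * X ^ 2 + C (6 * -(10 * a * s ^ 2)) =
      C (60 * a) * ((X - C s) * (X - C (-s))) := by
    simp only [map_mul, map_neg, map_pow, map_ofNat]
    ring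
  rw [phi, iterate_derivative_three_depressedQuintic, hfactor,
    natDegree_depressedQuintic a _ c d e ha, roots_C_mul _ (by simpa using ha),
    roots_mul (mul_ne_zero (X_sub_C_ne_zero s) (X_sub_C_ne_zero (-s))), roots_X_sub_C,
    roots_X_sub_C]
  simp only [Multiset.singleton_add, eval_depressedQuintic, Multiset.map_cons,
    Multiset.map_singleton, Multiset.sum_cons, Multiset.sum_singleton, Nat.reduceSub,
    Nat.cast_ofNat]
  field_simp
  ring

theorem phi_depressedQuintic_two (ha : a ≠ 0) :
    phi (depressedQuintic a b c d e) 2 = e - b * c / (4 * a) := by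
  have ha20 : 20 * a ≠ 0 := by simpa using ha
  obtain ⟨x, y, z, hroots, hvieta⟩ := Cubic.exists_roots_eq_three ⟨20 * a, 0, 6 * b, 2 * c⟩ ha20
  have hcubic : C (20 * a) * X ^ 3 + C (6 * b) * X + C (2 * c) =
      (⟨20 * a, 0, 6 * b, 2 * c⟩ : Cubic ℂ).toPoly := by
    simp [Cubic.toPoly]
  rw [phi, iterate_derivative_two_depressedQuintic, hcubic, hroots,
    natDegree_depressedQuintic a b c d e ha]
  simp only [Cubic.mk.injEq, true_and] at hvieta
  obtain ⟨hsum, hb, hc⟩ := hvieta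
  obtain rfl : z = -x - y := by
    linear_combination -((mul_eq_zero.mp hsum.symm).resolve_left ha20)
  obtain rfl : b = 10 * a * (x * y + x * (-x - y) + y * (-x - y)) / 3 := by
    linear_combination hb / 6
  obtain rfl : c = -(10 * a * (x * y * (-x - y))) := by
    linear_combination hc / 2
  simp only [Multiset.insert_eq_cons, eval_depressedQuintic, Multiset.map_cons,
    Multiset.map_singleton, Multiset.sum_cons, Multiset.sum_singleton, Nat.reduceSub,
    Nat.cast_ofNat]
  field_simp
  ring

theorem quintic_relation_depressedQuintic (ha : a ≠ 0) :
    2 * phi (depressedQuintic a b c d e) 2 - 5 * phi (depressedQuintic a b c d e) 3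
      + 3 * phi (depressedQuintic a b c d e) 4 = 0 := by
  rw [phi_depressedQuintic_two b c d e ha, phi_depressedQuintic_three b c d e ha,
    phi_depressedQuintic_four b c d e ha]
  field_simp
  ring

end DepressedQuintic

/-- In any quintic, `2·φ₂ − 5·φ₃ + 3·φ₄ = 0`. -/
theorem quintic_relation_d (f : Polynomial ℂ) (hf : f.degree = 5) :
    2 * phi f 2 - 5 * phi f 3 + 3 * phi f 4 = 0 := by
  have hf5 : f.natDegree = 5 := natDegree_eq_of_degree_eq_some hf
  obtain ⟨c, hc⟩ := exists_coeff_comp_X_add_C_eq_zero f (n := 4) hf5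
  have hg : (f.comp (X + C c)).natDegree = 5 := by simp [natDegree_comp, hf5]
  have hlead : (f.comp (X + C c)).coeff 5 ≠ 0 := by
    rw [← hg]
    exact leadingCoeff_ne_zero.mpr (by rintro h; simp [h] at hg)
  rw [← phi_comp_X_add_C f c 2, ← phi_comp_X_add_C f c 3, ← phi_comp_X_add_C f c 4,
    eq_depressedQuintic_of_coeff_four_eq_zero _ hg.le hc]
  exact quintic_relation_depressedQuintic _ _ _ _ hlead
end

section
/- Let f be a polynomial over ℂ of degree 6, and for 1 ≤ ρ ≤ 5 let φ_ρ denote the average of f over the multiset of the (6−ρ) roots of the ρ-th derivative f^(ρ) (counted with multiplicity). Then 77·φ₁ − 120·φ₂ + 60·φ₃ − 20·φ₄ + 3·φ₅ = 0. -/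
open Polynomial

noncomputable def ps (s : Multiset ℂ) (k : ℕ) : ℂ := (s.map (· ^ k)).sum

noncomputable def qc (s : Multiset ℂ) (j : ℕ) : ℂ := (-1) ^ j * s.esymm j

lemma ps_cons (a : ℂ) (s : Multiset ℂ) (k : ℕ) : ps (a ::ₘ s) k = a ^ k + ps s k := by
  simp [ps]

lemma ps_zero (s : Multiset ℂ) : ps s 0 = (Multiset.card s : ℂ) := by
  simp [ps]

lemma esymm_zero' (s : Multiset ℂ) : s.esymm 0 = 1 := by
  simp [Multiset.esymm]

lemma esymm_cons (a : ℂ) (s : Multiset ℂ) (j : ℕ) :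
    (a ::ₘ s).esymm (j + 1) = s.esymm (j + 1) + a * s.esymm j := by
  rw [Multiset.esymm, Multiset.esymm, Multiset.esymm, Multiset.powersetCard_cons,
    Multiset.map_add, Multiset.sum_add, Multiset.map_map]
  simp only [Function.comp, Multiset.prod_cons]
  rw [Multiset.sum_map_mul_left]

lemma esymm_eq_zero (s : Multiset ℂ) (j : ℕ) (h : Multiset.card s < j) : s.esymm j = 0 := by
  obtain ⟨i, hi, rfl⟩ : ∃ i, 0 < i ∧ j = Multiset.card s + i :=
    ⟨j - Multiset.card s, by omega, by omega⟩
  rw [Multiset.esymm, Multiset.powersetCard_card_add s hi]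
  simp

lemma qc_zero (s : Multiset ℂ) : qc s 0 = 1 := by simp [qc, esymm_zero']

lemma qc_cons (a : ℂ) (s : Multiset ℂ) (j : ℕ) :
    qc (a ::ₘ s) (j + 1) = qc s (j + 1) - a * qc s j := by
  simp only [qc, esymm_cons, pow_succ]
  ring

lemma qc_eq_zero (s : Multiset ℂ) (j : ℕ) (h : Multiset.card s < j) : qc s j = 0 := by
  simp [qc, esymm_eq_zero s j h]

lemma ps_empty (k : ℕ) : ps 0 k = 0 := by simp [ps]

lemma newton (s : Multiset ℂ) :
    ps s 1 = -qc s 1 ∧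
    ps s 2 = qc s 1 ^ 2 - 2 * qc s 2 ∧
    ps s 3 = 3 * qc s 1 * qc s 2 - qc s 1 ^ 3 - 3 * qc s 3 ∧
    ps s 4 = 4 * qc s 1 * qc s 3 - 4 * qc s 1 ^ 2 * qc s 2 + qc s 1 ^ 4 + 2 * qc s 2 ^ 2
      - 4 * qc s 4 ∧
    ps s 5 = -5 * qc s 1 * qc s 2 ^ 2 + 5 * qc s 1 * qc s 4 - 5 * qc s 1 ^ 2 * qc s 3
      + 5 * qc s 1 ^ 3 * qc s 2 - qc s 1 ^ 5 + 5 * qc s 2 * qc s 3 - 5 * qc s 5 ∧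
    ps s 6 = -12 * qc s 1 * qc s 2 * qc s 3 + 6 * qc s 1 * qc s 5 + 9 * qc s 1 ^ 2 * qc s 2 ^ 2
      - 6 * qc s 1 ^ 2 * qc s 4 + 6 * qc s 1 ^ 3 * qc s 3 - 6 * qc s 1 ^ 4 * qc s 2 + qc s 1 ^ 6
      + 6 * qc s 2 * qc s 4 - 2 * qc s 2 ^ 3 + 3 * qc s 3 ^ 2 - 6 * qc s 6 := by
  induction s using Multiset.induction with
  | empty =>
    have hq : ∀ j : ℕ, 0 < j → qc (0 : Multiset ℂ) j = 0 := fun j hj =>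
      qc_eq_zero 0 j (by simpa using hj)
    refine ⟨?_, ?_, ?_, ?_, ?_, ?_⟩ <;>
      simp [ps_empty, hq 1 one_pos, hq 2 (by norm_num), hq 3 (by norm_num), hq 4 (by norm_num),
        hq 5 (by norm_num), hq 6 (by norm_num)]
  | cons a s ih =>
    obtain ⟨h1, h2, h3, h4, h5, h6⟩ := ih
    have c1 : qc (a ::ₘ s) 1 = qc s 1 - a := by
      have := qc_cons a s 0; rw [qc_zero] at this; simpa using this
    have c2 : qc (a ::ₘ s) 2 = qc s 2 - a * qc s 1 := qc_cons a s 1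
    have c3 : qc (a ::ₘ s) 3 = qc s 3 - a * qc s 2 := qc_cons a s 2
    have c4 : qc (a ::ₘ s) 4 = qc s 4 - a * qc s 3 := qc_cons a s 3
    have c5 : qc (a ::ₘ s) 5 = qc s 5 - a * qc s 4 := qc_cons a s 4
    have c6 : qc (a ::ₘ s) 6 = qc s 6 - a * qc s 5 := qc_cons a s 5
    refine ⟨?_, ?_, ?_, ?_, ?_, ?_⟩ <;>
      simp only [ps_cons, c1, c2, c3, c4, c5, c6]
    · linear_combination h1
    · linear_combination h2
    · linear_combination h3
    · linear_combination h4
    · linear_combination h5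
    · linear_combination h6

lemma card_roots_complex (g : Polynomial ℂ) : Multiset.card g.roots = g.natDegree :=
  Polynomial.splits_iff_card_roots.mp (IsAlgClosed.splits g)

lemma qc_roots (g : Polynomial ℂ) (hg : g ≠ 0) {j : ℕ} (hj : j ≤ g.natDegree) :
    qc g.roots j = g.coeff (g.natDegree - j) / g.leadingCoeff := by
  have h := Polynomial.coeff_eq_esymm_roots_of_splits (IsAlgClosed.splits g)
      (Nat.sub_le g.natDegree j)
  rw [Nat.sub_sub_self hj] at h
  have hc : g.leadingCoeff ≠ 0 := Polynomial.leadingCoeff_ne_zero.mpr hg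
  rw [qc, h]
  field_simp

lemma qc_roots_high (g : Polynomial ℂ) {j : ℕ} (hj : g.natDegree < j) : qc g.roots j = 0 :=
  qc_eq_zero _ _ (by rw [card_roots_complex]; exact hj)

lemma sum_map_poly (s : Multiset ℂ) (c : ℕ → ℂ) :
    (s.map fun x => ∑ i ∈ Finset.range 7, c i * x ^ i).sum
      = ∑ i ∈ Finset.range 7, c i * ps s i := by
  induction s using Multiset.induction with
  | empty => simp [ps]
  | cons a s ih => simp [ps_cons, ih, mul_add, Finset.sum_add_distrib]

lemma phi_formula (f : Polynomial ℂ) (hnd : f.natDegree = 6) (ρ : ℕ) :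
    phi f ρ = (∑ i ∈ Finset.range 7, f.coeff i * ps (derivative^[ρ] f).roots i)
      / ((6 - ρ : ℕ) : ℂ) := by
  rw [phi, hnd]
  congr 1
  rw [← sum_map_poly]
  exact congrArg _ (Multiset.map_congr rfl fun x _ =>
    Polynomial.eval_eq_sum_range' (by omega) x)

lemma gcoeff (f : Polynomial ℂ) (ρ m : ℕ) :
    (derivative^[ρ] f).coeff m = ((m + ρ).descFactorial ρ : ℂ) * f.coeff (m + ρ) := by
  rw [Polynomial.coeff_iterate_derivative, nsmul_eq_mul]

lemma gnatdeg (f : Polynomial ℂ) (hnd : f.natDegree = 6) (ha6 : f.coeff 6 ≠ 0) {ρ : ℕ}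
    (hρ : ρ ≤ 5) : (derivative^[ρ] f).natDegree = 6 - ρ := by
  have hle : (derivative^[ρ] f).natDegree ≤ 6 - ρ := by
    have h := Polynomial.natDegree_iterate_derivative f ρ
    omega
  have hco : (derivative^[ρ] f).coeff (6 - ρ) ≠ 0 := by
    rw [gcoeff, show 6 - ρ + ρ = 6 by omega]
    refine mul_ne_zero (Nat.cast_ne_zero.mpr fun h => ?_) ha6
    have := Nat.descFactorial_eq_zero_iff_lt.mp h
    omega
  exact le_antisymm hle (Polynomial.le_natDegree_of_ne_zero hco)

lemma gne (f : Polynomial ℂ) (hnd : f.natDegree = 6) (ha6 : f.coeff 6 ≠ 0) {ρ : ℕ}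
    (hρ : ρ ≤ 5) : derivative^[ρ] f ≠ 0 := by
  intro h0
  have hco : (derivative^[ρ] f).coeff (6 - ρ) ≠ 0 := by
    rw [gcoeff, show 6 - ρ + ρ = 6 by omega]
    refine mul_ne_zero (Nat.cast_ne_zero.mpr fun h => ?_) ha6
    have := Nat.descFactorial_eq_zero_iff_lt.mp h
    omega
  rw [h0] at hco
  simp at hco

lemma qval (f : Polynomial ℂ) (hnd : f.natDegree = 6) (ha6 : f.coeff 6 ≠ 0) {ρ j : ℕ}
    (hρ : ρ ≤ 5) (hj : j ≤ 6 - ρ) :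
    qc (derivative^[ρ] f).roots j
      = (((6 - j).descFactorial ρ : ℂ) * f.coeff (6 - j))
        / (((6).descFactorial ρ : ℂ) * f.coeff 6) := by
  have hdeg := gnatdeg f hnd ha6 hρ
  rw [qc_roots _ (gne f hnd ha6 hρ) (by omega), hdeg, Polynomial.leadingCoeff, hdeg,
    gcoeff, gcoeff, show 6 - ρ - j + ρ = 6 - j by omega, show 6 - ρ + ρ = 6 by omega]

lemma qval0 (f : Polynomial ℂ) (hnd : f.natDegree = 6) (ha6 : f.coeff 6 ≠ 0) {ρ j : ℕ}
    (hρ : ρ ≤ 5) (hj : 6 - ρ < j) : qc (derivative^[ρ] f).roots j = 0 :=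
  qc_roots_high _ (by rw [gnatdeg f hnd ha6 hρ]; exact hj)

set_option maxHeartbeats 4000000 in
/-- In any sextic, `77·φ₁ − 120·φ₂ + 60·φ₃ − 20·φ₄ + 3·φ₅ = 0`. -/
theorem sextic_relation (f : Polynomial ℂ) (hf : f.degree = 6) :
    77 * phi f 1 - 120 * phi f 2 + 60 * phi f 3 - 20 * phi f 4 + 3 * phi f 5 = 0 := by
  have hnd : f.natDegree = 6 := natDegree_eq_of_degree_eq_some hf
  have hf0 : f ≠ 0 := fun h0 => by simp [h0] at hf
  have ha6 : f.coeff 6 ≠ 0 := by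
    have h := Polynomial.leadingCoeff_ne_zero.mpr hf0
    rwa [Polynomial.leadingCoeff, hnd] at h
  have hb : f.coeff 6 * (f.coeff 6)⁻¹ = 1 := mul_inv_cancel₀ ha6
  obtain ⟨Pa1, Pa2, Pa3, Pa4, Pa5, Pa6⟩ := newton (derivative^[1] f).roots
  obtain ⟨Pb1, Pb2, Pb3, Pb4, Pb5, Pb6⟩ := newton (derivative^[2] f).roots
  obtain ⟨Pc1, Pc2, Pc3, Pc4, Pc5, Pc6⟩ := newton (derivative^[3] f).roots
  obtain ⟨Pd1, Pd2, Pd3, Pd4, Pd5, Pd6⟩ := newton (derivative^[4] f).roots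
  obtain ⟨Pe1, Pe2, Pe3, Pe4, Pe5, Pe6⟩ := newton (derivative^[5] f).roots
  have hca : (Multiset.card (derivative^[1] f).roots : ℂ) = 5 := by
    rw [card_roots_complex, gnatdeg f hnd ha6 (by norm_num : 1 ≤ 5)]
    norm_num
  have hcb : (Multiset.card (derivative^[2] f).roots : ℂ) = 4 := by
    rw [card_roots_complex, gnatdeg f hnd ha6 (by norm_num : 2 ≤ 5)]
    norm_num
  have hcc : (Multiset.card (derivative^[3] f).roots : ℂ) = 3 := by
    rw [card_roots_complex, gnatdeg f hnd ha6 (by norm_num : 3 ≤ 5)]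
    norm_num
  have hcd : (Multiset.card (derivative^[4] f).roots : ℂ) = 2 := by
    rw [card_roots_complex, gnatdeg f hnd ha6 (by norm_num : 4 ≤ 5)]
    norm_num
  have hce : (Multiset.card (derivative^[5] f).roots : ℂ) = 1 := by
    rw [card_roots_complex, gnatdeg f hnd ha6 (by norm_num : 5 ≤ 5)]
    norm_num
  have hq11 : qc (derivative^[1] f).roots 1
      = (5 / 6 : ℂ) * f.coeff 5 * (f.coeff 6)⁻¹ := by
    rw [qval f hnd ha6 (ρ := 1) (j := 1) (by norm_num) (by norm_num)]
    norm_num [show Nat.descFactorial 5 1 = 5 from rfl,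
      show Nat.descFactorial 6 1 = 6 from rfl, div_eq_mul_inv, mul_inv]
    ring
  have hq12 : qc (derivative^[1] f).roots 2
      = (4 / 6 : ℂ) * f.coeff 4 * (f.coeff 6)⁻¹ := by
    rw [qval f hnd ha6 (ρ := 1) (j := 2) (by norm_num) (by norm_num)]
    norm_num [show Nat.descFactorial 4 1 = 4 from rfl,
      show Nat.descFactorial 6 1 = 6 from rfl, div_eq_mul_inv, mul_inv]
    ring
  have hq13 : qc (derivative^[1] f).roots 3
      = (3 / 6 : ℂ) * f.coeff 3 * (f.coeff 6)⁻¹ := by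
    rw [qval f hnd ha6 (ρ := 1) (j := 3) (by norm_num) (by norm_num)]
    norm_num [show Nat.descFactorial 3 1 = 3 from rfl,
      show Nat.descFactorial 6 1 = 6 from rfl, div_eq_mul_inv, mul_inv]
    ring
  have hq14 : qc (derivative^[1] f).roots 4
      = (2 / 6 : ℂ) * f.coeff 2 * (f.coeff 6)⁻¹ := by
    rw [qval f hnd ha6 (ρ := 1) (j := 4) (by norm_num) (by norm_num)]
    norm_num [show Nat.descFactorial 2 1 = 2 from rfl,
      show Nat.descFactorial 6 1 = 6 from rfl, div_eq_mul_inv, mul_inv]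
    ring
  have hq15 : qc (derivative^[1] f).roots 5
      = (1 / 6 : ℂ) * f.coeff 1 * (f.coeff 6)⁻¹ := by
    rw [qval f hnd ha6 (ρ := 1) (j := 5) (by norm_num) (by norm_num)]
    norm_num [show Nat.descFactorial 1 1 = 1 from rfl,
      show Nat.descFactorial 6 1 = 6 from rfl, div_eq_mul_inv, mul_inv]
    ring
  have hq16 : qc (derivative^[1] f).roots 6 = 0 :=
    qval0 f hnd ha6 (ρ := 1) (j := 6) (by norm_num) (by norm_num)
  have hq21 : qc (derivative^[2] f).roots 1
      = (20 / 30 : ℂ) * f.coeff 5 * (f.coeff 6)⁻¹ := by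
    rw [qval f hnd ha6 (ρ := 2) (j := 1) (by norm_num) (by norm_num)]
    norm_num [show Nat.descFactorial 5 2 = 20 from rfl,
      show Nat.descFactorial 6 2 = 30 from rfl, div_eq_mul_inv, mul_inv]
    ring
  have hq22 : qc (derivative^[2] f).roots 2
      = (12 / 30 : ℂ) * f.coeff 4 * (f.coeff 6)⁻¹ := by
    rw [qval f hnd ha6 (ρ := 2) (j := 2) (by norm_num) (by norm_num)]
    norm_num [show Nat.descFactorial 4 2 = 12 from rfl,
      show Nat.descFactorial 6 2 = 30 from rfl, div_eq_mul_inv, mul_inv]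
    ring
  have hq23 : qc (derivative^[2] f).roots 3
      = (6 / 30 : ℂ) * f.coeff 3 * (f.coeff 6)⁻¹ := by
    rw [qval f hnd ha6 (ρ := 2) (j := 3) (by norm_num) (by norm_num)]
    norm_num [show Nat.descFactorial 3 2 = 6 from rfl,
      show Nat.descFactorial 6 2 = 30 from rfl, div_eq_mul_inv, mul_inv]
    ring
  have hq24 : qc (derivative^[2] f).roots 4
      = (2 / 30 : ℂ) * f.coeff 2 * (f.coeff 6)⁻¹ := by
    rw [qval f hnd ha6 (ρ := 2) (j := 4) (by norm_num) (by norm_num)]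
    norm_num [show Nat.descFactorial 2 2 = 2 from rfl,
      show Nat.descFactorial 6 2 = 30 from rfl, div_eq_mul_inv, mul_inv]
    ring
  have hq25 : qc (derivative^[2] f).roots 5 = 0 :=
    qval0 f hnd ha6 (ρ := 2) (j := 5) (by norm_num) (by norm_num)
  have hq26 : qc (derivative^[2] f).roots 6 = 0 :=
    qval0 f hnd ha6 (ρ := 2) (j := 6) (by norm_num) (by norm_num)
  have hq31 : qc (derivative^[3] f).roots 1
      = (60 / 120 : ℂ) * f.coeff 5 * (f.coeff 6)⁻¹ := by
    rw [qval f hnd ha6 (ρ := 3) (j := 1) (by norm_num) (by norm_num)]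
    norm_num [show Nat.descFactorial 5 3 = 60 from rfl,
      show Nat.descFactorial 6 3 = 120 from rfl, div_eq_mul_inv, mul_inv]
    ring
  have hq32 : qc (derivative^[3] f).roots 2
      = (24 / 120 : ℂ) * f.coeff 4 * (f.coeff 6)⁻¹ := by
    rw [qval f hnd ha6 (ρ := 3) (j := 2) (by norm_num) (by norm_num)]
    norm_num [show Nat.descFactorial 4 3 = 24 from rfl,
      show Nat.descFactorial 6 3 = 120 from rfl, div_eq_mul_inv, mul_inv]
    ring
  have hq33 : qc (derivative^[3] f).roots 3
      = (6 / 120 : ℂ) * f.coeff 3 * (f.coeff 6)⁻¹ := by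
    rw [qval f hnd ha6 (ρ := 3) (j := 3) (by norm_num) (by norm_num)]
    norm_num [show Nat.descFactorial 3 3 = 6 from rfl,
      show Nat.descFactorial 6 3 = 120 from rfl, div_eq_mul_inv, mul_inv]
    ring
  have hq34 : qc (derivative^[3] f).roots 4 = 0 :=
    qval0 f hnd ha6 (ρ := 3) (j := 4) (by norm_num) (by norm_num)
  have hq35 : qc (derivative^[3] f).roots 5 = 0 :=
    qval0 f hnd ha6 (ρ := 3) (j := 5) (by norm_num) (by norm_num)
  have hq36 : qc (derivative^[3] f).roots 6 = 0 :=
    qval0 f hnd ha6 (ρ := 3) (j := 6) (by norm_num) (by norm_num)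
  have hq41 : qc (derivative^[4] f).roots 1
      = (120 / 360 : ℂ) * f.coeff 5 * (f.coeff 6)⁻¹ := by
    rw [qval f hnd ha6 (ρ := 4) (j := 1) (by norm_num) (by norm_num)]
    norm_num [show Nat.descFactorial 5 4 = 120 from rfl,
      show Nat.descFactorial 6 4 = 360 from rfl, div_eq_mul_inv, mul_inv]
    ring
  have hq42 : qc (derivative^[4] f).roots 2
      = (24 / 360 : ℂ) * f.coeff 4 * (f.coeff 6)⁻¹ := by
    rw [qval f hnd ha6 (ρ := 4) (j := 2) (by norm_num) (by norm_num)]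
    norm_num [show Nat.descFactorial 4 4 = 24 from rfl,
      show Nat.descFactorial 6 4 = 360 from rfl, div_eq_mul_inv, mul_inv]
    ring
  have hq43 : qc (derivative^[4] f).roots 3 = 0 :=
    qval0 f hnd ha6 (ρ := 4) (j := 3) (by norm_num) (by norm_num)
  have hq44 : qc (derivative^[4] f).roots 4 = 0 :=
    qval0 f hnd ha6 (ρ := 4) (j := 4) (by norm_num) (by norm_num)
  have hq45 : qc (derivative^[4] f).roots 5 = 0 :=
    qval0 f hnd ha6 (ρ := 4) (j := 5) (by norm_num) (by norm_num)
  have hq46 : qc (derivative^[4] f).roots 6 = 0 :=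
    qval0 f hnd ha6 (ρ := 4) (j := 6) (by norm_num) (by norm_num)
  have hq51 : qc (derivative^[5] f).roots 1
      = (120 / 720 : ℂ) * f.coeff 5 * (f.coeff 6)⁻¹ := by
    rw [qval f hnd ha6 (ρ := 5) (j := 1) (by norm_num) (by norm_num)]
    norm_num [show Nat.descFactorial 5 5 = 120 from rfl,
      show Nat.descFactorial 6 5 = 720 from rfl, div_eq_mul_inv, mul_inv]
    ring
  have hq52 : qc (derivative^[5] f).roots 2 = 0 :=
    qval0 f hnd ha6 (ρ := 5) (j := 2) (by norm_num) (by norm_num)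
  have hq53 : qc (derivative^[5] f).roots 3 = 0 :=
    qval0 f hnd ha6 (ρ := 5) (j := 3) (by norm_num) (by norm_num)
  have hq54 : qc (derivative^[5] f).roots 4 = 0 :=
    qval0 f hnd ha6 (ρ := 5) (j := 4) (by norm_num) (by norm_num)
  have hq55 : qc (derivative^[5] f).roots 5 = 0 :=
    qval0 f hnd ha6 (ρ := 5) (j := 5) (by norm_num) (by norm_num)
  have hq56 : qc (derivative^[5] f).roots 6 = 0 :=
    qval0 f hnd ha6 (ρ := 5) (j := 6) (by norm_num) (by norm_num)
  rw [phi_formula f hnd 1, phi_formula f hnd 2, phi_formula f hnd 3,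
      phi_formula f hnd 4, phi_formula f hnd 5]
  simp only [Finset.sum_range_succ, Finset.sum_range_zero]
  rw [Pa1, Pa2, Pa3, Pa4, Pa5, Pa6, Pb1, Pb2, Pb3, Pb4, Pb5, Pb6, Pc1, Pc2, Pc3, Pc4, Pc5, Pc6, Pd1, Pd2, Pd3, Pd4, Pd5, Pd6, Pe1, Pe2, Pe3, Pe4, Pe5, Pe6]
  simp only [ps_zero]
  rw [hca, hcb, hcc, hcd, hce]
  rw [hq11, hq12, hq13, hq14, hq15, hq16, hq21, hq22, hq23, hq24, hq25, hq26, hq31, hq32, hq33, hq34, hq35, hq36, hq41, hq42, hq43, hq44, hq45, hq46, hq51, hq52, hq53, hq54, hq55, hq56]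
  simp only [show ((6 - 1 : ℕ) : ℂ) = 5 by norm_num, show ((6 - 2 : ℕ) : ℂ) = 4 by norm_num,
    show ((6 - 3 : ℕ) : ℂ) = 3 by norm_num, show ((6 - 4 : ℕ) : ℂ) = 2 by norm_num,
    show ((6 - 5 : ℕ) : ℂ) = 1 by norm_num]
  linear_combination ((77 / 6 : ℂ) * f.coeff 1 * f.coeff 5 * (f.coeff 6)⁻¹
    + (236 / 15 : ℂ) * f.coeff 2 * f.coeff 4 * (f.coeff 6)⁻¹
    - (289 / 18 : ℂ) * f.coeff 2 * f.coeff 5 ^ 2 * (f.coeff 6)⁻¹ ^ 2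
    - (100 / 3 : ℂ) * f.coeff 3 * f.coeff 4 * f.coeff 5 * (f.coeff 6)⁻¹ ^ 2
    + (1211 / 72 : ℂ) * f.coeff 3 * f.coeff 5 ^ 3 * (f.coeff 6)⁻¹ ^ 3
    + (81 / 10 : ℂ) * f.coeff 3 ^ 2 * (f.coeff 6)⁻¹
    - (1829 / 108 : ℂ) * f.coeff 4 * f.coeff 5 ^ 4 * (f.coeff 6)⁻¹ ^ 4
    + (76 / 3 : ℂ) * f.coeff 4 ^ 2 * f.coeff 5 ^ 2 * (f.coeff 6)⁻¹ ^ 3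
    - (28 / 5 : ℂ) * f.coeff 4 ^ 3 * (f.coeff 6)⁻¹ ^ 2
    + (1829 / 648 : ℂ) * f.coeff 5 ^ 6 * (f.coeff 6)⁻¹ ^ 5) * hb
end
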